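/- Let f : ℝ^n → ℝ be differentiable with gradient ∇f, attain its minimum value f* at a unique minimizer x*, and satisfy the PL inequality (1/2)‖∇f(x)‖² ≥ μ(f(x) − f*) for all x, with μ > 0. Let c1, c2 > 0, p1 > 2, p2 ∈ (1,2) with p2 ≠ 4/3, and set α := p1/(2(p1−1)), β := p2/(2(p2−1)), p := c1(2μ)^α, q := c2(2μ)^β. Let x : ℝ → ℝ^n be a differentiable solution of the FxTS-GF dynamics with V0 := f(x(0)) − f* > 0, and define l1 := 1/(p(2−α)) and l2 := ((1 + V0^(β−1))^((β−2)/(β−1)) − 1)/(q·V0^(β−2)·(β−2)). Then the static regret satisfies ∫₀^T (f(x(t)) − f*) dt ≤ l1 + l2 for every T ≥ 0. -/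

import Mathlib

/-!
Along a solution, `V t = f (x t) - f*` has derivative `⟪∇f, ẋ⟫ = -(c₁ ‖∇f‖^(2α) + c₂ ‖∇f‖^(2β))`,
and the PL inequality `2μ V ≤ ‖∇f‖²` turns this into `V' ≤ -(p V^α + q V^β)`. Whenever
`V' ≤ -c V^γ`, the potential `Φ(V) = V^(2-γ) / (c (2-γ))` decreases at least as fast as `V`
itself, so `∫ₛᵀ V ≤ Φ(V s) - Φ(V T)`. Use the `β`-term while `V ≥ 1` and the `α`-term afterwards;
since `α < 1`, `Φ_α` is nonnegative and the second phase costs at most `Φ_α(1) = l₁`, while the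
first costs at most `Φ_β(V₀) - Φ_β(min V₀ 1) ≤ l₂`.
-/

open Real Set MeasureTheory
open scoped InnerProductSpace

noncomputable def regretPotential (c γ y : ℝ) : ℝ := y ^ (2 - γ) / (c * (2 - γ))

section RegretPotential

variable {c γ : ℝ}

lemma hasDerivAt_regretPotential (hγ : γ ≠ 2) {y : ℝ} (hy : y ≠ 0 ∨ γ < 1) :
    HasDerivAt (regretPotential c γ) (y ^ (1 - γ) / c) y := by
  have h2γ : 2 - γ ≠ 0 := sub_ne_zero.2 hγ.symm
  refine ((hasDerivAt_rpow_const (p := 2 - γ) (hy.imp_right fun h => by linarith)).div_const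
    (c * (2 - γ))).congr_deriv ?_
  rw [show 2 - γ - 1 = 1 - γ by ring, mul_comm c, ← div_div, mul_div_cancel_left₀ _ h2γ]

lemma regretPotential_monotoneOn (hc : 0 < c) (hγ : γ ≠ 2) :
    MonotoneOn (regretPotential c γ) (Ioi 0) := by
  have hderiv : ∀ y ∈ Ioi (0 : ℝ), HasDerivAt (regretPotential c γ) (y ^ (1 - γ) / c) y :=
    fun y hy => hasDerivAt_regretPotential hγ (Or.inl (ne_of_gt hy))
  refine monotoneOn_of_deriv_nonneg (convex_Ioi 0)
    (fun y hy => (hderiv y hy).continuousAt.continuousWithinAt) ?_ ?_ <;> rw [interior_Ioi]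
  · exact fun y hy => (hderiv y hy).differentiableAt.differentiableWithinAt
  · intro y hy
    rw [(hderiv y hy).deriv]
    exact div_nonneg (rpow_nonneg (le_of_lt hy) _) hc.le

lemma le_neg_rpow_div_mul_of_le_neg_rpow (hc : 0 < c) {v d : ℝ} (hv : 0 ≤ v)
    (hd : d ≤ -(c * v ^ γ)) (hvγ : v ≠ 0 ∨ γ < 1) : v ≤ -(v ^ (1 - γ) / c * d) := by
  rcases hv.eq_or_lt with rfl | hv
  · simp [zero_rpow (by linarith [hvγ.resolve_left (not_not.2 rfl)] : 1 - γ ≠ 0)]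
  calc v = v ^ (1 - γ) / c * (c * v ^ γ) := by
        field_simp
        rw [← rpow_add hv, sub_add_cancel, rpow_one]
    _ ≤ -(v ^ (1 - γ) / c * d) := by
        rw [← mul_neg]
        exact mul_le_mul_of_nonneg_left (le_neg.2 hd) (by positivity)

theorem integral_le_regretPotential_sub {V d : ℝ → ℝ} {s T : ℝ} (hc : 0 < c) (hγ : γ ≠ 2)
    (hsT : s ≤ T) (hV : ∀ t ∈ Icc s T, HasDerivAt V (d t) t)
    (hVnn : ∀ t ∈ Icc s T, 0 ≤ V t) (hd : ∀ t ∈ Icc s T, d t ≤ -(c * V t ^ γ))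
    (hVγ : ∀ t ∈ Icc s T, V t ≠ 0 ∨ γ < 1) :
    ∫ t in s..T, V t ≤ regretPotential c γ (V s) - regretPotential c γ (V T) := by
  have hΦV : ∀ t ∈ Icc s T, HasDerivAt (fun t => -regretPotential c γ (V t))
      (-(V t ^ (1 - γ) / c * d t)) t :=
    fun t ht => ((hasDerivAt_regretPotential hγ (hVγ t ht)).comp t (hV t ht)).neg
  have := intervalIntegral.integral_le_sub_of_hasDeriv_right_of_le hsT
    (fun t ht => (hΦV t ht).continuousAt.continuousWithinAt)
    (fun t ht => (hΦV t (Ioo_subset_Icc_self ht)).hasDerivWithinAt)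
    (ContinuousOn.integrableOn_Icc fun t ht => (hV t ht).continuousAt.continuousWithinAt)
    (fun t ht => le_neg_rpow_div_mul_of_le_neg_rpow hc (hVnn t (Ioo_subset_Icc_self ht))
      (hd t (Ioo_subset_Icc_self ht)) (hVγ t (Ioo_subset_Icc_self ht)))
  linarith

lemma regretPotential_nonneg (hc : 0 < c) (hγ : γ < 2) {y : ℝ} (hy : 0 ≤ y) :
    0 ≤ regretPotential c γ y :=
  div_nonneg (rpow_nonneg hy _) (mul_pos hc (by linarith)).le

theorem integral_le_regretPotential_one {V d : ℝ → ℝ} {s T : ℝ} (hc : 0 < c) (hγ : γ < 1)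
    (hsT : s ≤ T) (hV : ∀ t ∈ Icc s T, HasDerivAt V (d t) t)
    (hVnn : ∀ t ∈ Icc s T, 0 ≤ V t) (hd : ∀ t ∈ Icc s T, d t ≤ -(c * V t ^ γ))
    (hVs : V s ∈ Ioc 0 1) :
    ∫ t in s..T, V t ≤ regretPotential c γ 1 := by
  have hγ2 : γ ≠ 2 := by linarith
  have hmono := regretPotential_monotoneOn hc hγ2 hVs.1 (mem_Ioi.2 one_pos) hVs.2
  have hΦT := regretPotential_nonneg (γ := γ) hc (by linarith) (hVnn T (right_mem_Icc.2 hsT))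
  linarith [integral_le_regretPotential_sub hc hγ2 hsT hV hVnn hd fun _ _ => Or.inr hγ]

end RegretPotential

theorem integral_le_of_hasDerivAt_le_neg_rpow_add_rpow {V d : ℝ → ℝ} {p q α β : ℝ}
    (hp : 0 < p) (hq : 0 < q) (hα : α < 1) (hβ : β ≠ 2)
    (hV : ∀ t, 0 ≤ t → HasDerivAt V (d t) t) (hVnn : ∀ t, 0 ≤ t → 0 ≤ V t)
    (hd : ∀ t, 0 ≤ t → d t ≤ -(p * V t ^ α + q * V t ^ β)) (hV0 : 0 < V 0) {T : ℝ}
    (hT : 0 ≤ T) :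
    ∫ t in (0 : ℝ)..T, V t ≤ regretPotential p α 1 +
      (regretPotential q β (V 0) - regretPotential q β (min (V 0) 1)) := by
  have hpV : ∀ t, 0 ≤ t → 0 ≤ p * V t ^ α := fun t ht => by have := hVnn t ht; positivity
  have hqV : ∀ t, 0 ≤ t → 0 ≤ q * V t ^ β := fun t ht => by have := hVnn t ht; positivity
  have hVc : ContinuousOn V (Icc 0 T) := fun t ht => (hV t ht.1).continuousAt.continuousWithinAt
  have hanti : AntitoneOn V (Icc 0 T) := by
    refine antitoneOn_of_deriv_nonpos (convex_Icc 0 T) hVc ?_ ?_ <;> rw [interior_Icc]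
    · exact fun t ht => (hV t ht.1.le).differentiableAt.differentiableWithinAt
    · intro t ht
      rw [(hV t ht.1.le).deriv]
      linarith [hd t ht.1.le, hpV t ht.1.le, hqV t ht.1.le]
  set y := min (V 0) 1
  have hy : 0 < y := lt_min hV0 one_pos
  obtain ⟨t₁, ht₁, hyt₁, hend⟩ : ∃ t₁ ∈ Icc 0 T, y ≤ V t₁ ∧ (V t₁ ≤ 1 ∨ t₁ = T) := by
    by_cases hyT : y ≤ V T
    · exact ⟨T, right_mem_Icc.2 hT, hyT, Or.inr rfl⟩
    · obtain ⟨t₁, ht₁, h⟩ :=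
        intermediate_value_Icc' hT hVc ⟨(not_le.1 hyT).le, min_le_left _ _⟩
      exact ⟨t₁, ht₁, h.ge, Or.inl (h.trans_le (min_le_right _ _))⟩
  have hlevel : ∀ t ∈ Icc 0 t₁, y ≤ V t :=
    fun t ht => hyt₁.trans (hanti ⟨ht.1, ht.2.trans ht₁.2⟩ ht₁ ht.2)
  have hβphase : ∫ t in (0 : ℝ)..t₁, V t ≤
      regretPotential q β (V 0) - regretPotential q β y := by
    refine (integral_le_regretPotential_sub hq hβ ht₁.1 (fun t ht => hV t ht.1)
      (fun t ht => hVnn t ht.1) (fun t ht => by linarith [hd t ht.1, hpV t ht.1])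
      (fun t ht => Or.inl (hy.trans_le (hlevel t ht)).ne')).trans ?_
    exact sub_le_sub_left (regretPotential_monotoneOn hq hβ hy (hy.trans_le hyt₁) hyt₁) _
  have hαphase : ∫ t in t₁..T, V t ≤ regretPotential p α 1 := by
    rcases hend with hVt₁ | rfl
    · exact integral_le_regretPotential_one hp hα ht₁.2 (fun t ht => hV t (ht₁.1.trans ht.1))
        (fun t ht => hVnn t (ht₁.1.trans ht.1))
        (fun t ht => by linarith [hd t (ht₁.1.trans ht.1), hqV t (ht₁.1.trans ht.1)])
        ⟨hy.trans_le hyt₁, hVt₁⟩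
    · simpa using regretPotential_nonneg hp (by linarith) zero_le_one
  rw [← intervalIntegral.integral_add_adjacent_intervals
    (ContinuousOn.intervalIntegrable_of_Icc ht₁.1 (hVc.mono (Icc_subset_Icc le_rfl ht₁.2)))
    (ContinuousOn.intervalIntegrable_of_Icc ht₁.2 (hVc.mono (Icc_subset_Icc ht₁.1 le_rfl)))]
  linarith

lemma regretPotential_sub_min_one_le {q β v : ℝ} (hq : 0 < q) (hβ : 1 < β) (hβ2 : β ≠ 2)
    (hv : 0 < v) :
    regretPotential q β v - regretPotential q β (min v 1) ≤
      ((1 + v ^ (β - 1)) ^ ((β - 2) / (β - 1)) - 1) / (q * v ^ (β - 2) * (β - 2)) := by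
  -- `w` is the value at time `1 / (q (β - 1))` of the solution of `V' = -q V^β` started at `v`,
  -- and the right-hand side is the integral of that solution up to this time.
  set w := (v ^ (1 - β) + 1) ^ (1 - β)⁻¹
  have hw : 0 < w := rpow_pos_of_pos (by positivity) _
  have hwv : w ≤ v :=
    calc w ≤ (v ^ (1 - β)) ^ (1 - β)⁻¹ :=
          rpow_le_rpow_of_nonpos (rpow_pos_of_pos hv _) (by linarith) (inv_nonpos.2 (by linarith))
      _ = v := rpow_rpow_inv hv.le (by linarith)
  have hw1 : w ≤ 1 :=
    rpow_le_one_of_one_le_of_nonpos (by linarith [rpow_pos_of_pos hv (1 - β)])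
      (inv_nonpos.2 (by linarith))
  have hvw : v ^ (2 - β) * (1 + v ^ (β - 1)) ^ ((β - 2) / (β - 1)) = w ^ (2 - β) := by
    have h1β : 1 - β ≠ 0 := by linarith
    have hk : (1 - β) * ((β - 2) / (β - 1)) = 2 - β := by
      rw [mul_div_assoc', div_eq_iff (by linarith)]
      ring
    have hbase : v ^ (1 - β) * (1 + v ^ (β - 1)) = v ^ (1 - β) + 1 := by
      rw [mul_add, mul_one, ← rpow_add hv, show 1 - β + (β - 1) = 0 by ring, rpow_zero]
    rw [← hk, rpow_mul hv.le, ← mul_rpow (by positivity) (by positivity), hbase,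
      ← rpow_mul (by positivity), inv_mul_cancel_left₀ h1β]
  have hinv : v ^ (β - 2) = (v ^ (2 - β))⁻¹ := by rw [← rpow_neg hv.le, neg_sub]
  have hl2 : ((1 + v ^ (β - 1)) ^ ((β - 2) / (β - 1)) - 1) / (q * v ^ (β - 2) * (β - 2)) =
      regretPotential q β v - regretPotential q β w := by
    unfold regretPotential
    rw [hinv, ← hvw]
    have : v ^ (2 - β) ≠ 0 := (rpow_pos_of_pos hv _).ne'
    have : β - 2 ≠ 0 := sub_ne_zero.2 hβ2
    have : 2 - β ≠ 0 := sub_ne_zero.2 hβ2.symm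
    field_simp
    ring
  rw [hl2]
  exact sub_le_sub_left (regretPotential_monotoneOn hq hβ2 hw (lt_min hv one_pos)
    (le_min hwv hw1)) _

section FxTSField

variable {E : Type*} [NormedAddCommGroup E] [InnerProductSpace ℝ E]

noncomputable def fxtsField [DecidableEq E] (c1 c2 p1 p2 : ℝ) (g : E) : E :=
  if g = 0 then 0 else
    -(c1 / ‖g‖ ^ ((p1 - 2) / (p1 - 1))) • g - (c2 / ‖g‖ ^ ((p2 - 2) / (p2 - 1))) • g

lemma inner_div_rpow_smul_self {g : E} (hg : g ≠ 0) {p : ℝ} (hp : p ≠ 1) (c : ℝ) :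
    ⟪g, (c / ‖g‖ ^ ((p - 2) / (p - 1))) • g⟫_ℝ = c * (‖g‖ ^ 2) ^ (p / (2 * (p - 1))) := by
  have hexp : 2 - (p - 2) / (p - 1) = 2 * (p / (2 * (p - 1))) := by
    field_simp [sub_ne_zero.2 hp]
    ring
  rw [real_inner_smul_right, real_inner_self_eq_norm_sq, ← rpow_two, ← rpow_mul (norm_nonneg g),
    ← hexp, rpow_sub (norm_pos_iff.2 hg), rpow_two, mul_div_assoc']
  ring

lemma inner_fxtsField_le [DecidableEq E] {c1 c2 p1 p2 w : ℝ} (hc1 : 0 ≤ c1) (hc2 : 0 ≤ c2)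
    (hp1 : 1 < p1) (hp2 : 1 < p2) {g : E} (hw : 0 ≤ w) (hwg : w ≤ ‖g‖ ^ 2) :
    ⟪g, fxtsField c1 c2 p1 p2 g⟫_ℝ ≤
      -(c1 * w ^ (p1 / (2 * (p1 - 1))) + c2 * w ^ (p2 / (2 * (p2 - 1)))) := by
  have hα : 0 < p1 / (2 * (p1 - 1)) := div_pos (by linarith) (by linarith)
  have hβ : 0 < p2 / (2 * (p2 - 1)) := div_pos (by linarith) (by linarith)
  by_cases hg : g = 0
  · obtain rfl : w = 0 := le_antisymm (by simpa [hg] using hwg) hw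
    simp [fxtsField, hg, zero_rpow hα.ne', zero_rpow hβ.ne']
  rw [fxtsField, if_neg hg, inner_sub_right, neg_smul, inner_neg_right,
    inner_div_rpow_smul_self hg hp1.ne', inner_div_rpow_smul_self hg hp2.ne', ← neg_add',
    neg_le_neg_iff]
  gcongr

lemma HasGradientAt.comp_hasDerivAt [CompleteSpace E] {f : E → ℝ} {g x' : E} {x : ℝ → E}
    {t : ℝ} (hf : HasGradientAt f g (x t)) (hx : HasDerivAt x x' t) :
    HasDerivAt (fun s => f (x s)) ⟪g, x'⟫_ℝ t :=
  hf.hasFDerivAt.comp_hasDerivAt t hx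

end FxTSField

theorem stmt_11_general (n : ℕ) (f : EuclideanSpace ℝ (Fin n) → ℝ)
    (f' : EuclideanSpace ℝ (Fin n) → EuclideanSpace ℝ (Fin n))
    (hgrad : ∀ y, HasGradientAt f (f' y) y)
    (fstar μ : ℝ) (hμ : 0 < μ)
    (hmin : ∀ y, fstar ≤ f y)
    (hPL : ∀ y, μ * (f y - fstar) ≤ (1 / 2) * ‖f' y‖ ^ 2)
    (c1 c2 p1 p2 : ℝ) (hc1 : 0 < c1) (hc2 : 0 < c2)
    (hp1 : 2 < p1) (hp2 : p2 ∈ Set.Ioo (1 : ℝ) 2) (hp2' : p2 ≠ 4 / 3)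
    (α β p q : ℝ)
    (hα : α = p1 / (2 * (p1 - 1))) (hβ : β = p2 / (2 * (p2 - 1)))
    (hpdef : p = c1 * (2 * μ) ^ α) (hqdef : q = c2 * (2 * μ) ^ β)
    (x : ℝ → EuclideanSpace ℝ (Fin n))
    (hx : ∀ t, 0 ≤ t → HasDerivAt x
      (if f' (x t) = 0 then 0 else
        -(c1 / ‖f' (x t)‖ ^ ((p1 - 2) / (p1 - 1))) • f' (x t)
          - (c2 / ‖f' (x t)‖ ^ ((p2 - 2) / (p2 - 1))) • f' (x t)) t)
    (V0 l1 l2 : ℝ) (hV0 : V0 = f (x 0) - fstar) (hV0pos : 0 < V0)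
    (hl1 : l1 = 1 / (p * (2 - α)))
    (hl2 : l2 = ((1 + V0 ^ (β - 1)) ^ ((β - 2) / (β - 1)) - 1) /
      (q * V0 ^ (β - 2) * (β - 2))) :
    ∀ T : ℝ, 0 ≤ T → (∫ t in (0 : ℝ)..T, (f (x t) - fstar)) ≤ l1 + l2 := by
  intro T hT
  obtain ⟨hp21, hp22⟩ := hp2
  have hα1 : α < 1 := by rw [hα, div_lt_one (by linarith)]; linarith
  have hβ1 : 1 < β := by rw [hβ, lt_div_iff₀ (by linarith)]; linarith
  have hβ2 : β ≠ 2 := by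
    rw [hβ, Ne, div_eq_iff (by linarith)]
    contrapose! hp2'
    linarith
  have hq : 0 < q := by rw [hqdef]; positivity
  have hVnn : ∀ t, 0 ≤ f (x t) - fstar := fun t => sub_nonneg.2 (hmin _)
  have hV : ∀ t, 0 ≤ t → HasDerivAt (fun t => f (x t) - fstar)
      ⟪f' (x t), fxtsField c1 c2 p1 p2 (f' (x t))⟫_ℝ t :=
    fun t ht => ((hgrad (x t)).comp_hasDerivAt (hx t ht)).sub_const fstar
  have hd : ∀ t, ⟪f' (x t), fxtsField c1 c2 p1 p2 (f' (x t))⟫_ℝ ≤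
      -(p * (f (x t) - fstar) ^ α + q * (f (x t) - fstar) ^ β) := by
    intro t
    rw [hpdef, hqdef, mul_assoc, mul_assoc, ← mul_rpow (by positivity) (hVnn t),
      ← mul_rpow (by positivity) (hVnn t), hα, hβ]
    exact inner_fxtsField_le hc1.le hc2.le (by linarith) hp21 (by positivity [hVnn t])
      (by linarith [hPL (x t)])
  calc ∫ t in (0 : ℝ)..T, (f (x t) - fstar)
      ≤ regretPotential p α 1 + (regretPotential q β V0 - regretPotential q β (min V0 1)) := by
        rw [hV0]
        exact integral_le_of_hasDerivAt_le_neg_rpow_add_rpow (by rw [hpdef]; positivity) hq hα1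
          hβ2 hV (fun t _ => hVnn t) (fun t _ => hd t) (hV0 ▸ hV0pos) hT
    _ ≤ l1 + l2 := by
        rw [hl1, hl2, regretPotential, one_rpow]
        exact add_le_add le_rfl (regretPotential_sub_min_one_le hq hβ1 hβ2 hV0pos)

/-- Theorem 3, regret bound: the static regret
`∫₀^T (f(x(t)) - f*) dt` of any solution of the FxTS-GF dynamics is bounded by
the constant `l1 + l2`, uniformly in `T ≥ 0`. -/
theorem stmt_11 (n : ℕ) (f : EuclideanSpace ℝ (Fin n) → ℝ)
    (f' : EuclideanSpace ℝ (Fin n) → EuclideanSpace ℝ (Fin n))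
    (hgrad : ∀ y, HasGradientAt f (f' y) y)
    (xstar : EuclideanSpace ℝ (Fin n)) (fstar μ : ℝ) (hμ : 0 < μ)
    (hfstar : f xstar = fstar) (hmin : ∀ y, fstar ≤ f y)
    (huniq : ∀ y, f y = fstar → y = xstar)
    (hPL : ∀ y, μ * (f y - fstar) ≤ (1 / 2) * ‖f' y‖ ^ 2)
    (c1 c2 p1 p2 : ℝ) (hc1 : 0 < c1) (hc2 : 0 < c2)
    (hp1 : 2 < p1) (hp2 : p2 ∈ Set.Ioo (1 : ℝ) 2) (hp2' : p2 ≠ 4 / 3)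
    (α β p q : ℝ)
    (hα : α = p1 / (2 * (p1 - 1))) (hβ : β = p2 / (2 * (p2 - 1)))
    (hpdef : p = c1 * (2 * μ) ^ α) (hqdef : q = c2 * (2 * μ) ^ β)
    (x : ℝ → EuclideanSpace ℝ (Fin n))
    (hx : ∀ t, 0 ≤ t → HasDerivAt x
      (if f' (x t) = 0 then 0 else
        -(c1 / ‖f' (x t)‖ ^ ((p1 - 2) / (p1 - 1))) • f' (x t)
          - (c2 / ‖f' (x t)‖ ^ ((p2 - 2) / (p2 - 1))) • f' (x t)) t)
    (V0 l1 l2 : ℝ) (hV0 : V0 = f (x 0) - fstar) (hV0pos : 0 < V0)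
    (hl1 : l1 = 1 / (p * (2 - α)))
    (hl2 : l2 = ((1 + V0 ^ (β - 1)) ^ ((β - 2) / (β - 1)) - 1) /
      (q * V0 ^ (β - 2) * (β - 2))) :
    ∀ T : ℝ, 0 ≤ T → (∫ t in (0 : ℝ)..T, (f (x t) - fstar)) ≤ l1 + l2 :=
  stmt_11_general n f f' hgrad fstar μ hμ hmin hPL c1 c2 p1 p2 hc1 hc2 hp1 hp2 hp2' α β p q hα hβ
    hpdef hqdef x hx V0 l1 l2 hV0 hV0pos hl1 hl2
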